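/- arXiv:2311.00263 — 4 statements merged into one kernel-verified Lean document; each statement's English description precedes it below -/
import Mathlib

section
/- Let A, B be n×n real upper-triangular matrices with all diagonal entries of A bounded in absolute value by a < 1 and all diagonal entries of B bounded in absolute value by b < 1, and all entries of A and B bounded in absolute value by M. Then there exists a constant C such that for any finite product P = M_1 M_2 ⋯ M_k where each M_i ∈ {A, B}, the operator norm ‖P‖ ≤ C (i.e., arbitrary switched products of Schur-stable commuting-structure upper-triangular matrices are uniformly bounded, with no dwell-time constraint). -/
attribute [local instance] Matrix.linftyOpNormedRing

/-!
Conjugating by `D = diag(1, ε, ε², …)` turns an upper triangular `X` into `D⁻¹ X D`, whose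
`(i, j)` entry is `ε ^ (j - i) * X i j`: the diagonal is unchanged and the strictly upper part
is scaled by at most `ε`. With `max a b + n M ε ≤ 1` every row sum of `D⁻¹ A D` and `D⁻¹ B D` is
at most `1`, so both have `ℓ∞`-operator norm at most `1`, and hence every product of them does.
Undoing the conjugation bounds every word in `A`, `B` by `‖D‖ ‖D⁻¹‖`.
-/

section RowSum

attribute [local instance] Matrix.linftyOpSeminormedAddCommGroup

theorem Matrix.linfty_opNorm_le_of_forall_sum_le {m n α : Type*} [Fintype m] [Fintype n]
    [SeminormedAddCommGroup α] (A : Matrix m n α) {r : ℝ} (hr : 0 ≤ r)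
    (h : ∀ i, ∑ j, ‖A i j‖ ≤ r) : ‖A‖ ≤ r := by
  rw [Matrix.linfty_opNorm_def, ← Real.coe_toNNReal r hr, NNReal.coe_le_coe, Finset.sup_le_iff]
  intro i _
  rw [← NNReal.coe_le_coe, Real.coe_toNNReal r hr]
  push_cast
  exact h i

end RowSum

section ListProd

variable {R : Type*} [NormedRing R] (u : Rˣ) {L : List R}

theorem norm_inv_mul_list_prod_le (h : ∀ x ∈ L, ‖(u⁻¹ * x * u : R)‖ ≤ 1) :
    ‖(u⁻¹ * L.prod : R)‖ ≤ ‖(↑u⁻¹ : R)‖ := by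
  induction L with
  | nil => simp
  | cons x L ih =>
    rw [List.forall_mem_cons] at h
    have hsplit : (u⁻¹ * (x :: L).prod : R) = (u⁻¹ * x * u) * (u⁻¹ * L.prod) := by
      simp [mul_assoc]
    calc ‖(u⁻¹ * (x :: L).prod : R)‖ ≤ ‖(u⁻¹ * x * u : R)‖ * ‖(u⁻¹ * L.prod : R)‖ := by
          rw [hsplit]; exact norm_mul_le _ _
      _ ≤ 1 * ‖(↑u⁻¹ : R)‖ := by gcongr; exacts [h.1, ih h.2]
      _ = ‖(↑u⁻¹ : R)‖ := one_mul _

theorem norm_list_prod_le_of_forall_norm_conj_le_one (h : ∀ x ∈ L, ‖(u⁻¹ * x * u : R)‖ ≤ 1) :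
    ‖L.prod‖ ≤ ‖(u : R)‖ * ‖(↑u⁻¹ : R)‖ :=
  calc ‖L.prod‖ = ‖(u * (u⁻¹ * L.prod) : R)‖ := by rw [Units.mul_inv_cancel_left]
    _ ≤ ‖(u : R)‖ * ‖(↑u⁻¹ : R)‖ := norm_mul_le_of_le le_rfl (norm_inv_mul_list_prod_le u h)

end ListProd

namespace Matrix

def diagonalPowUnit (n : ℕ) {R : Type*} [Semiring R] (ε : Rˣ) : (Matrix (Fin n) (Fin n) R)ˣ :=
  Units.map (diagonalRingHom (Fin n) R).toMonoidHom
    (MulEquiv.piUnits.symm fun i : Fin n => ε ^ (i : ℕ))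

def diagonalPowConj {n : ℕ} {R : Type*} [Semiring R] (ε : Rˣ) (X : Matrix (Fin n) (Fin n) R) :
    Matrix (Fin n) (Fin n) R :=
  (diagonalPowUnit n ε)⁻¹ * X * diagonalPowUnit n ε

theorem diagonalPowConj_apply {n : ℕ} {R : Type*} [Semiring R] (ε : Rˣ)
    (X : Matrix (Fin n) (Fin n) R) (i j : Fin n) :
    diagonalPowConj ε X i j = (↑ε⁻¹ : R) ^ (i : ℕ) * X i j * (ε : R) ^ (j : ℕ) := by
  simp [diagonalPowConj, diagonalPowUnit]

theorem diagonalPowConj_apply_of_le {n : ℕ} {R : Type*} [CommRing R] (ε : Rˣ)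
    (X : Matrix (Fin n) (Fin n) R) {i j : Fin n} (hij : i ≤ j) :
    diagonalPowConj ε X i j = (ε : R) ^ ((j : ℕ) - i) * X i j := by
  obtain ⟨d, hd⟩ := Nat.exists_eq_add_of_le (Fin.le_iff_val_le_val.mp hij)
  have hcancel : (↑ε⁻¹ : R) ^ (i : ℕ) * (ε : R) ^ (i : ℕ) = 1 := by
    rw [← mul_pow, Units.inv_mul, one_pow]
  rw [diagonalPowConj_apply, hd, Nat.add_sub_cancel_left, pow_add]
  linear_combination ((ε : R) ^ d * X i j) * hcancel

section NormedField

variable {𝕜 : Type*} [NormedField 𝕜] {n : ℕ} {X : Matrix (Fin n) (Fin n) 𝕜} {ε : 𝕜ˣ}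

theorem BlockTriangular.norm_diagonalPowConj_apply_le (hX : X.BlockTriangular id)
    (hε : ‖(ε : 𝕜)‖ ≤ 1) {i j : Fin n} (hij : i ≠ j) :
    ‖diagonalPowConj ε X i j‖ ≤ ‖X i j‖ * ‖(ε : 𝕜)‖ := by
  rcases hij.lt_or_gt with hlt | hgt
  · rw [diagonalPowConj_apply_of_le ε X hlt.le, norm_mul, norm_pow, mul_comm]
    gcongr
    exact pow_le_of_le_one (norm_nonneg _) hε (by omega)
  · simp [diagonalPowConj_apply, hX hgt]

theorem BlockTriangular.norm_diagonalPowConj_le_one (hX : X.BlockTriangular id) {c M : ℝ}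
    (hdiag : ∀ i, ‖X i i‖ ≤ c) (hent : ∀ i j, ‖X i j‖ ≤ M) (hε : ‖(ε : 𝕜)‖ ≤ 1)
    (hsmall : c + n * M * ‖(ε : 𝕜)‖ ≤ 1) :
    ‖diagonalPowConj ε X‖ ≤ 1 := by
  refine linfty_opNorm_le_of_forall_sum_le _ zero_le_one fun i => ?_
  have hentry (j : Fin n) :
      ‖diagonalPowConj ε X i j‖ ≤ (if i = j then ‖X i i‖ else 0) + ‖X i j‖ * ‖(ε : 𝕜)‖ := by
    by_cases hij : i = j
    · subst hij
      rw [diagonalPowConj_apply_of_le ε X le_rfl, Nat.sub_self, pow_zero, one_mul, if_pos rfl]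
      exact le_add_of_nonneg_right (by positivity)
    · rw [if_neg hij, zero_add]
      exact hX.norm_diagonalPowConj_apply_le hε hij
  calc ∑ j, ‖diagonalPowConj ε X i j‖
      ≤ ∑ j, ((if i = j then ‖X i i‖ else 0) + ‖X i j‖ * ‖(ε : 𝕜)‖) :=
        Finset.sum_le_sum fun j _ => hentry j
    _ ≤ c + ∑ _j : Fin n, M * ‖(ε : 𝕜)‖ := by
        rw [Finset.sum_add_distrib, Finset.sum_ite_eq, if_pos (Finset.mem_univ i)]
        gcongr with j
        exacts [hdiag i, hent i j]
    _ ≤ 1 := by simpa [mul_assoc] using hsmall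

end NormedField

end Matrix

open Matrix Filter Topology in
theorem stmt4_general (n : ℕ) (A B : Matrix (Fin n) (Fin n) ℝ)
    (hAtri : A.BlockTriangular id) (hBtri : B.BlockTriangular id)
    (a b M : ℝ) (ha : a < 1) (hb : b < 1)
    (hAdiag : ∀ i, |A i i| ≤ a) (hBdiag : ∀ i, |B i i| ≤ b)
    (hAent : ∀ i j, |A i j| ≤ M) (hBent : ∀ i j, |B i j| ≤ M) :
    ∃ C : ℝ, ∀ (k : ℕ) (w : Fin k → Bool),
      ‖(List.ofFn (fun i => if w i then A else B)).prod‖ ≤ C := by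
  set c := max a b
  have hsmall : ∀ᶠ ε : ℝ in 𝓝 0, ‖ε‖ ≤ 1 ∧ c + n * M * ‖ε‖ ≤ 1 :=
    ((continuous_norm.tendsto' 0 0 norm_zero).eventually (eventually_le_nhds one_pos)).and
      (((by fun_prop : Continuous fun ε : ℝ => c + n * M * ‖ε‖).tendsto' 0 c (by simp)).eventually
        (eventually_le_nhds (max_lt ha hb)))
  obtain ⟨ε, ⟨hε1, hεc⟩, hε0⟩ :=
    ((hsmall.filter_mono nhdsWithin_le_nhds).and (self_mem_nhdsWithin : {(0 : ℝ)}ᶜ ∈ 𝓝[≠] 0)).exists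
  set u := diagonalPowUnit n (Units.mk0 ε hε0)
  refine ⟨‖(u : Matrix (Fin n) (Fin n) ℝ)‖ * ‖(↑u⁻¹ : Matrix (Fin n) (Fin n) ℝ)‖, fun k w =>
    norm_list_prod_le_of_forall_norm_conj_le_one u (List.forall_mem_ofFn_iff.2 fun i => ?_)⟩
  split
  · exact hAtri.norm_diagonalPowConj_le_one (fun i => (hAdiag i).trans (le_max_left a b))
      hAent hε1 hεc
  · exact hBtri.norm_diagonalPowConj_le_one (fun i => (hBdiag i).trans (le_max_right a b))
      hBent hε1 hεc

theorem stmt4 (n : ℕ) (A B : Matrix (Fin n) (Fin n) ℝ)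
    (hAtri : A.BlockTriangular id) (hBtri : B.BlockTriangular id)
    (a b M : ℝ) (ha : a < 1) (hb : b < 1) (hM : 0 < M)
    (hAdiag : ∀ i, |A i i| ≤ a) (hBdiag : ∀ i, |B i i| ≤ b)
    (hAent : ∀ i j, |A i j| ≤ M) (hBent : ∀ i j, |B i j| ≤ M) :
    ∃ C : ℝ, ∀ (k : ℕ) (w : Fin k → Bool),
      ‖(List.ofFn (fun i => if w i then A else B)).prod‖ ≤ C :=
  stmt4_general n A B hAtri hBtri a b M ha hb hAdiag hBdiag hAent hBent
end

section
/- Let S̃ be an n×n upper-triangular nonnegative real matrix with all diagonal entries equal to values ζ_r ≥ 0, H = diag of positive scalars 2^{-R_r}, and γ_1 ∈ (0,1), γ_2 > ρ(S̃). Suppose for each r, 2^{R_r} > ζ_r/γ_1, so that ρ(S̃H/γ_1) < 1 and ρ(S̃/γ_2) < 1. Then for any switching sequence, the sequence ω̄(k+1) = (S̃H/γ_1) ω̄(k) or ω̄(k+1) = (S̃/γ_2) ω̄(k) starting from any ω̄(0) remains bounded: there exists E with ‖ω̄(k)‖_∞ ≤ E for all k. -/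
/-!
Both modes are nonnegative upper-triangular matrices with all diagonal entries `< 1`. For such a
matrix `A` and small `ε > 0` the vector `v = (ε ^ i)_i` satisfies `A v ≤ v`: the diagonal
contributes at most `c ε ^ i` with `c < 1`, the strictly upper part only `O(ε ^ (i + 1))`. Hence the
weighted sup norm `max_i |x i| / ε ^ i` does not increase under either mode, whatever the
switching, and the iterates stay bounded.
-/

open Matrix Finset

theorem Finite.exists_lt_forall_le {α : Type*} [Finite α] {f : α → ℝ} {b : ℝ}
    (h : ∀ a, f a < b) : ∃ c < b, ∀ a, f a ≤ c := by
  have hev : ∀ᶠ c in nhdsWithin b (Set.Iio b), ∀ a, f a ≤ c :=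
    Filter.eventually_all.2 fun a =>
      Filter.mem_of_superset (Ioo_mem_nhdsLT (h a)) fun _ hc => hc.1.le
  obtain ⟨c, hc, hcb⟩ := (hev.and self_mem_nhdsWithin).exists
  exact ⟨c, hcb, hc⟩

section Triangular

variable {n : ℕ} {A : Matrix (Fin n) (Fin n) ℝ}

theorem mulVec_pow_le_pow (hnn : ∀ i j, 0 ≤ A i j) (htri : A.BlockTriangular id)
    {c S ε : ℝ} (hdiag : ∀ i, A i i ≤ c) (hrow : ∀ i, ∑ j, A i j ≤ S)
    (hε0 : 0 ≤ ε) (hε1 : ε ≤ 1) (hcS : c + ε * S ≤ 1) :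
    A *ᵥ (fun j : Fin n => ε ^ (j : ℕ)) ≤ fun j : Fin n => ε ^ (j : ℕ) := by
  intro i
  have hoff : ∀ j ∈ univ.erase i, A i j * ε ^ (j : ℕ) ≤ A i j * ε ^ ((i : ℕ) + 1) := by
    intro j hj
    rcases lt_or_gt_of_ne (ne_of_mem_erase hj) with hji | hij
    · simp [htri hji]
    · exact mul_le_mul_of_nonneg_left (pow_le_pow_of_le_one hε0 hε1 hij) (hnn i j)
  have hoff_sum : ∑ j ∈ univ.erase i, A i j ≤ S :=
    (sum_le_sum_of_subset_of_nonneg (erase_subset _ _) fun j _ _ => hnn i j).trans (hrow i)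
  calc (A *ᵥ fun j : Fin n => ε ^ (j : ℕ)) i
      = A i i * ε ^ (i : ℕ) + ∑ j ∈ univ.erase i, A i j * ε ^ (j : ℕ) :=
        (add_sum_erase _ _ (mem_univ i)).symm
    _ ≤ A i i * ε ^ (i : ℕ) + (∑ j ∈ univ.erase i, A i j) * ε ^ ((i : ℕ) + 1) := by
        rw [sum_mul]; exact add_le_add le_rfl (sum_le_sum hoff)
    _ ≤ c * ε ^ (i : ℕ) + S * ε ^ ((i : ℕ) + 1) := by
        gcongr; exact hdiag i
    _ = (c + ε * S) * ε ^ (i : ℕ) := by ring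
    _ ≤ ε ^ (i : ℕ) := mul_le_of_le_one_left (pow_nonneg hε0 _) hcS

theorem exists_pos_forall_mulVec_pow_le {σ : Type*} [Finite σ]
    (A : σ → Matrix (Fin n) (Fin n) ℝ) (hnn : ∀ s i j, 0 ≤ A s i j)
    (htri : ∀ s, (A s).BlockTriangular id) (hdiag : ∀ s i, A s i i < 1) :
    ∃ ε, 0 < ε ∧ ε ≤ 1 ∧
      ∀ s, A s *ᵥ (fun j : Fin n => ε ^ (j : ℕ)) ≤ fun j : Fin n => ε ^ (j : ℕ) := by
  obtain ⟨c₀, hc₀1, hc₀⟩ := Finite.exists_lt_forall_le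
    (f := fun p : σ × Fin n => A p.1 p.2 p.2) fun p => hdiag p.1 p.2
  obtain ⟨S₀, hS₀⟩ := (Set.finite_range fun p : σ × Fin n => ∑ j, A p.1 p.2 j).bddAbove
  set c := max c₀ 0
  set S := max S₀ 0
  have hc1 : 0 < 1 - c := sub_pos.2 (max_lt hc₀1 one_pos)
  have hS1 : 0 < 1 + S := by positivity
  obtain ⟨ε, hε⟩ : ∃ ε, ε = (1 - c) / (1 + S) := ⟨_, rfl⟩
  have hε0 : 0 < ε := hε ▸ div_pos hc1 hS1
  have hε1 : ε ≤ 1 := by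
    rw [hε, div_le_one hS1]; linarith [le_max_right c₀ 0, le_max_right S₀ 0]
  have hεS : ε * S ≤ 1 - c := by
    rw [hε, div_mul_eq_mul_div, div_le_iff₀ hS1]
    exact mul_le_mul_of_nonneg_left (by linarith) hc1.le
  refine ⟨ε, hε0, hε1, fun s => ?_⟩
  exact mulVec_pow_le_pow (hnn s) (htri s)
    (fun i => (hc₀ (s, i)).trans (le_max_left _ _))
    (fun i => (hS₀ ⟨(s, i), rfl⟩).trans (le_max_left _ _)) hε0.le hε1
    (by linarith)

end Triangular

section Switched

variable {ι σ : Type*} [Fintype ι]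

theorem abs_mulVec_le_of_mulVec_le {A : Matrix ι ι ℝ} (hnn : ∀ i j, 0 ≤ A i j) {v x : ι → ℝ}
    (hv : A *ᵥ v ≤ v) {C : ℝ} (hC : 0 ≤ C) (hx : ∀ j, |x j| ≤ C * v j) (i : ι) :
    |(A *ᵥ x) i| ≤ C * v i :=
  calc |(A *ᵥ x) i| ≤ ∑ j, |A i j * x j| := abs_sum_le_sum_abs _ _
    _ = ∑ j, A i j * |x j| := by simp only [abs_mul, abs_of_nonneg (hnn i _)]
    _ ≤ ∑ j, A i j * (C * v j) := sum_le_sum fun j _ => mul_le_mul_of_nonneg_left (hx j) (hnn i j)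
    _ = C * (A *ᵥ v) i := by simp only [mulVec, dotProduct, mul_sum, mul_left_comm]
    _ ≤ C * v i := mul_le_mul_of_nonneg_left (hv i) hC

theorem exists_forall_abs_le_of_forall_mulVec_le (A : σ → Matrix ι ι ℝ)
    (hnn : ∀ s i j, 0 ≤ A s i j) {v : ι → ℝ} (hv0 : ∀ i, 0 < v i) (hv : ∀ s, A s *ᵥ v ≤ v)
    (ω : ℕ → ι → ℝ) (sw : ℕ → σ) (hω : ∀ k, ω (k + 1) = A (sw k) *ᵥ ω k) :
    ∃ C, 0 ≤ C ∧ ∀ k i, |ω k i| ≤ C * v i := by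
  have hC : 0 ≤ ∑ j, |ω 0 j| / v j := sum_nonneg fun j _ => div_nonneg (abs_nonneg _) (hv0 j).le
  refine ⟨_, hC, fun k => ?_⟩
  induction k with
  | zero =>
    intro i
    rw [← div_le_iff₀ (hv0 i)]
    exact single_le_sum (f := fun j => |ω 0 j| / v j)
      (fun j _ => div_nonneg (abs_nonneg _) (hv0 j).le) (mem_univ i)
  | succ k ih =>
    rw [hω k]
    exact abs_mulVec_le_of_mulVec_le (hnn (sw k)) (hv (sw k)) hC ih

end Switched

theorem stmt7_general (n : ℕ) (St H : Matrix (Fin n) (Fin n) ℝ) (R : Fin n → ℝ) (γ1 γ2 : ℝ)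
    (hTri : St.BlockTriangular id) (hnn : ∀ i j, 0 ≤ St i j)
    (hH : H = Matrix.diagonal (fun i => (2:ℝ) ^ (-(R i))))
    (hγ1 : 0 < γ1)
    (hrate : ∀ i, St i i / γ1 < (2:ℝ) ^ (R i))
    (hγ2 : ∀ i, St i i < γ2)
    (ω : ℕ → Fin n → ℝ) (sw : ℕ → Bool)
    (hupd : ∀ k, ω (k+1) =
      if sw k then (γ1⁻¹ • (St * H)).mulVec (ω k) else (γ2⁻¹ • St).mulVec (ω k)) :
    ∃ E : ℝ, ∀ k i, |ω k i| ≤ E := by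
  set A : Bool → Matrix (Fin n) (Fin n) ℝ := fun b => if b then γ1⁻¹ • (St * H) else γ2⁻¹ • St
  have hA : ∀ b i j, A b i j =
      if b then γ1⁻¹ * (St i j * (2:ℝ) ^ (-(R j))) else γ2⁻¹ * St i j := by
    rintro (_ | _) i j <;> simp [A, hH, mul_diagonal]
  have hAnn : ∀ b i j, 0 ≤ A b i j := by
    rintro (_ | _) i j <;> simp only [hA, Bool.false_eq_true, ↓reduceIte]
    · exact mul_nonneg (inv_nonneg.2 ((hnn i i).trans_lt (hγ2 i)).le) (hnn i j)
    · exact mul_nonneg (inv_nonneg.2 hγ1.le) (mul_nonneg (hnn i j) (by positivity))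
  have hAtri : ∀ b, (A b).BlockTriangular id := by
    rintro (_ | _) i j hji <;> simp [hA, hTri hji]
  have hAdiag : ∀ b i, A b i i < 1 := by
    rintro (_ | _) i <;> simp only [hA, Bool.false_eq_true, ↓reduceIte]
    · exact (inv_mul_lt_one₀ ((hnn i i).trans_lt (hγ2 i))).2 (hγ2 i)
    · rw [inv_mul_lt_one₀ hγ1, Real.rpow_neg zero_le_two, ← div_eq_mul_inv,
        div_lt_iff₀ (by positivity), ← div_lt_iff₀' hγ1]
      exact hrate i
  obtain ⟨ε, hε0, hε1, hv⟩ := exists_pos_forall_mulVec_pow_le A hAnn hAtri hAdiag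
  obtain ⟨C, hC, hω⟩ := exists_forall_abs_le_of_forall_mulVec_le A hAnn
    (fun i => pow_pos hε0 _) hv ω sw fun k => by rw [hupd k]; cases sw k <;> rfl
  exact ⟨C, fun k i => (hω k i).trans (mul_le_of_le_one_right hC (pow_le_one₀ hε0.le hε1))⟩

theorem stmt7 (n : ℕ) (St H : Matrix (Fin n) (Fin n) ℝ) (R : Fin n → ℝ) (γ1 γ2 : ℝ)
    (hTri : St.BlockTriangular id) (hnn : ∀ i j, 0 ≤ St i j)
    (hH : H = Matrix.diagonal (fun i => (2:ℝ) ^ (-(R i))))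
    (hγ1 : 0 < γ1) (hγ1' : γ1 < 1)
    (hrate : ∀ i, St i i / γ1 < (2:ℝ) ^ (R i))
    (hγ2 : ∀ i, St i i < γ2)
    (ω : ℕ → Fin n → ℝ) (sw : ℕ → Bool)
    (hupd : ∀ k, ω (k+1) =
      if sw k then (γ1⁻¹ • (St * H)).mulVec (ω k) else (γ2⁻¹ • St).mulVec (ω k)) :
    ∃ E : ℝ, ∀ k i, |ω k i| ≤ E :=
  stmt7_general n St H R γ1 γ2 hTri hnn hH hγ1 hrate hγ2 ω sw hupd
end

section
/- Suppose a vector sequence e(k) ∈ ℝ^n and a positive vector sequence ω(k) ∈ ℝ^n_{>0} satisfy: (i) |e_l(0)| ≤ ω_l(0) for all components l; (ii) on attack-free steps e(k+1) = S̄(e(k) − ω(k)∘Q(e(k)/ω(k))) component-wise with |e_l(k) − ω_l(k)Q_l| ≤ ω_l(k)/2^{R_l} whenever |e_l(k)| ≤ ω_l(k), and ω(k+1) = S̃Hω(k); (iii) on attacked steps e(k+1) = S̄ e(k) and ω(k+1) = S̃ ω(k); where S̃ is entrywise ≥ |S̄| (the entrywise absolute value of S̄) and H = diag(2^{-R_l}).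 Then |e_l(k)| ≤ ω_l(k) for all l and all k ≥ 0. -/
namespace Matrix

theorem abs_mulVec_apply_le_mulVec_apply {ι κ α : Type*} [Fintype κ] [Ring α] [LinearOrder α]
    [IsStrictOrderedRing α] {A B : Matrix ι κ α} {x y : κ → α} (hAB : ∀ i j, |A i j| ≤ B i j)
    (hxy : ∀ j, |x j| ≤ y j) (i : ι) : |(A *ᵥ x) i| ≤ (B *ᵥ y) i :=
  calc |∑ j, A i j * x j| ≤ ∑ j, |A i j * x j| := Finset.abs_sum_le_sum_abs _ _
    _ ≤ ∑ j, B i j * y j := Finset.sum_le_sum fun j _ => by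
      rw [abs_mul]
      exact mul_le_mul (hAB i j) (hxy j) (abs_nonneg _) ((abs_nonneg _).trans (hAB i j))

end Matrix

theorem stmt8_general (n : ℕ) (Sb St H : Matrix (Fin n) (Fin n) ℝ)
    (hdom : ∀ i j, |Sb i j| ≤ St i j)
    (R : Fin n → ℕ)
    (hH : H = Matrix.diagonal (fun i => (2:ℝ) ^ (-(R i : ℝ))))
    (attack : ℕ → Prop)
    (e ω : ℕ → Fin n → ℝ) (Q : ℕ → Fin n → ℝ)
    (h0 : ∀ i, |e 0 i| ≤ ω 0 i)
    (hQ : ∀ k i, |e k i| ≤ ω k i → |e k i - ω k i * Q k i| ≤ ω k i * (2:ℝ) ^ (-(R i : ℝ)))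
    (hfree_e : ∀ k, ¬ attack k → e (k+1) = Sb.mulVec (fun i => e k i - ω k i * Q k i))
    (hfree_ω : ∀ k, ¬ attack k → ω (k+1) = (St * H).mulVec (ω k))
    (hatk_e : ∀ k, attack k → e (k+1) = Sb.mulVec (e k))
    (hatk_ω : ∀ k, attack k → ω (k+1) = St.mulVec (ω k)) :
    ∀ k i, |e k i| ≤ ω k i := by
  intro k
  induction k with
  | zero => exact h0
  | succ k ih =>
    by_cases hk : attack k
    · rw [hatk_e k hk, hatk_ω k hk]
      exact Matrix.abs_mulVec_apply_le_mulVec_apply hdom ih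
    · rw [hfree_e k hk, hfree_ω k hk, hH, ← Matrix.mulVec_mulVec]
      refine Matrix.abs_mulVec_apply_le_mulVec_apply hdom fun j => ?_
      rw [Matrix.mulVec_diagonal]
      exact (hQ k j (ih j)).trans_eq (mul_comm _ _)

theorem stmt8 (n : ℕ) (Sb St H : Matrix (Fin n) (Fin n) ℝ)
    (hdom : ∀ i j, |Sb i j| ≤ St i j)
    (R : Fin n → ℕ)
    (hH : H = Matrix.diagonal (fun i => (2:ℝ) ^ (-(R i : ℝ))))
    (attack : ℕ → Prop) [DecidablePred attack]
    (e ω : ℕ → Fin n → ℝ) (Q : ℕ → Fin n → ℝ)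
    (hωpos : ∀ k i, 0 < ω k i)
    (h0 : ∀ i, |e 0 i| ≤ ω 0 i)
    (hQ : ∀ k i, |e k i| ≤ ω k i → |e k i - ω k i * Q k i| ≤ ω k i * (2:ℝ) ^ (-(R i : ℝ)))
    (hfree_e : ∀ k, ¬ attack k → e (k+1) = Sb.mulVec (fun i => e k i - ω k i * Q k i))
    (hfree_ω : ∀ k, ¬ attack k → ω (k+1) = (St * H).mulVec (ω k))
    (hatk_e : ∀ k, attack k → e (k+1) = Sb.mulVec (e k))
    (hatk_ω : ∀ k, attack k → ω (k+1) = St.mulVec (ω k)) :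
    ∀ k i, |e k i| ≤ ω k i :=
  stmt8_general n Sb St H hdom R hH attack e ω Q h0 hQ hfree_e hfree_ω hatk_e hatk_ω
end

section
/- Suppose the sequence α(s_r) ∈ ℝ^n satisfies α(s_r) = M_r α(s_{r−1}) + w_{r−1} where each M_r is a product (B/γ_2)^{m_{r−1}} (G/γ_1) with ‖(B/γ_2)^m‖ ≤ C_2 for all m ≥ 0, and the switched products of (B/γ_2) and (G/γ_1) are uniformly exponentially stable (both upper triangular with spectral radii < 1), and ‖w_r‖ ≤ W for all r. Then there exists C_1 > 0 with ‖α(s_r)‖ ≤ C_1 for all r. -/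
attribute [local instance] Matrix.linftyOpNormedRing

/-!
The diagonal entries of an upper triangular matrix are its eigenvalues, so both `G/γ₁` and
`B/γ₂` have diagonal entries of absolute value `< 1`. Conjugating an upper triangular matrix `A`
by `D = diag(1, ε, ε², …)` multiplies the entry `(i, j)` by `ε^(j-i)`, so for small `ε > 0` the
row-sum norm of `D⁻¹ A D` is close to `maxᵢ |aᵢᵢ|`; choose one `ε` that makes both conjugates
contractions. In the coordinates `β = D⁻¹ α` every switched product `(B/γ₂)^m (G/γ₁)` then has
norm at most `‖D⁻¹ (G/γ₁) D‖ < 1`, whatever `m`, and `‖β_{r+1}‖ ≤ c ‖β_r‖ + const` with `c < 1`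
keeps `β`, hence `α`, bounded.
-/

open Matrix Filter Topology
open scoped NNReal ENNReal

section Spectrum

variable {m : Type*} [Fintype m] [DecidableEq m] [LinearOrder m]

theorem Matrix.IsUpperTriangular.diag_mem_spectrum {K : Type*} [Field K] {A : Matrix m m K}
    (hA : A.IsUpperTriangular) (i : m) : A i i ∈ spectrum K A := by
  refine mem_spectrum_of_isRoot_charpoly ?_
  rw [charpoly_of_isUpperTriangular A hA, Polynomial.IsRoot, Polynomial.eval_prod]
  exact Finset.prod_eq_zero (Finset.mem_univ i) (by simp)

theorem Matrix.IsUpperTriangular.abs_diag_lt_one {A : Matrix m m ℝ} (hA : A.IsUpperTriangular)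
    (hρ : spectralRadius ℂ (A.map Complex.ofReal) < 1) (i : m) : |A i i| < 1 := by
  have hmem : (A i i : ℂ) ∈ spectrum ℂ (A.map Complex.ofReal) :=
    IsUpperTriangular.diag_mem_spectrum (hA.map Complex.ofRealHom) i
  have hle : (‖(A i i : ℂ)‖₊ : ℝ≥0∞) ≤ spectralRadius ℂ (A.map Complex.ofReal) :=
    le_iSup₂ (α := ℝ≥0∞) (A i i : ℂ) hmem
  have h := hle.trans_lt hρ
  rw [Complex.nnnorm_real, ENNReal.coe_lt_one_iff, ← NNReal.coe_lt_one] at h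
  simpa using h

end Spectrum

theorem le_max_of_le_mul_add {u : ℕ → ℝ} {c K : ℝ} (hc₀ : 0 ≤ c) (hc₁ : c < 1)
    (h : ∀ r, u (r + 1) ≤ c * u r + K) (r : ℕ) : u r ≤ max (u 0) (K / (1 - c)) := by
  set M := max (u 0) (K / (1 - c))
  have hK : K ≤ (1 - c) * M := by
    rw [mul_comm, ← div_le_iff₀ (by linarith)]
    exact le_max_right _ _
  induction r with
  | zero => exact le_max_left _ _
  | succ r ih => nlinarith [h r]

theorem norm_pow_mul_le_of_norm_le_one {R : Type*} [SeminormedRing R] {a : R} (ha : ‖a‖ ≤ 1)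
    (b : R) (k : ℕ) : ‖a ^ k * b‖ ≤ ‖b‖ := by
  induction k with
  | zero => simp
  | succ k ih =>
    calc ‖a ^ (k + 1) * b‖ ≤ ‖a‖ * ‖a ^ k * b‖ := by
          rw [pow_succ', mul_assoc]; exact norm_mul_le _ _
      _ ≤ ‖b‖ := by nlinarith [norm_nonneg (a ^ k * b)]

theorem linfty_opNorm_lt_of_forall_sum_lt {m : Type*} [Fintype m] [DecidableEq m]
    {A : Matrix m m ℝ} {c : ℝ} (hc : 0 < c) (h : ∀ i, ∑ j, ‖A i j‖ < c) : ‖A‖ < c := by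
  lift c to ℝ≥0 using hc.le
  rw [linfty_opNorm_def, NNReal.coe_lt_coe, Finset.sup_lt_iff (by exact_mod_cast hc)]
  intro i _
  rw [← NNReal.coe_lt_coe, NNReal.coe_sum]
  exact h i

section Scaling

variable {n : ℕ}

abbrev diagPow (n : ℕ) (ε : ℝ) : Matrix (Fin n) (Fin n) ℝ := diagonal fun i => ε ^ (i : ℕ)

theorem diagPow_mul_diagPow_inv {ε : ℝ} (hε : ε ≠ 0) : diagPow n ε * diagPow n ε⁻¹ = 1 := by
  simp [diagonal_mul_diagonal, hε]

theorem diagPow_inv_mul_diagPow {ε : ℝ} (hε : ε ≠ 0) : diagPow n ε⁻¹ * diagPow n ε = 1 := by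
  simpa using diagPow_mul_diagPow_inv (n := n) (inv_ne_zero hε)

noncomputable def scaleConj (ε : ℝ) (A : Matrix (Fin n) (Fin n) ℝ) : Matrix (Fin n) (Fin n) ℝ :=
  diagPow n ε⁻¹ * A * diagPow n ε

theorem scaleConj_mul {ε : ℝ} (hε : ε ≠ 0) (A B : Matrix (Fin n) (Fin n) ℝ) :
    scaleConj ε (A * B) = scaleConj ε A * scaleConj ε B := by
  simp only [scaleConj, mul_assoc]
  rw [← mul_assoc (diagPow n ε) (diagPow n ε⁻¹), diagPow_mul_diagPow_inv hε, one_mul]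

theorem scaleConj_pow {ε : ℝ} (hε : ε ≠ 0) (A : Matrix (Fin n) (Fin n) ℝ) (k : ℕ) :
    scaleConj ε (A ^ k) = scaleConj ε A ^ k := by
  induction k with
  | zero => simp [scaleConj, diagPow_inv_mul_diagPow hε]
  | succ k ih => rw [pow_succ, scaleConj_mul hε, ih, pow_succ]

theorem mulVec_scaleConj {ε : ℝ} (hε : ε ≠ 0) (A : Matrix (Fin n) (Fin n) ℝ) (x : Fin n → ℝ) :
    scaleConj ε A *ᵥ (diagPow n ε⁻¹ *ᵥ x) = diagPow n ε⁻¹ *ᵥ (A *ᵥ x) := by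
  rw [scaleConj, mulVec_mulVec, mul_assoc, diagPow_mul_diagPow_inv hε, mul_one, mulVec_mulVec]

theorem scaleConj_apply_of_le {ε : ℝ} (hε : ε ≠ 0) (A : Matrix (Fin n) (Fin n) ℝ) {i j : Fin n}
    (hij : i ≤ j) : scaleConj ε A i j = ε ^ ((j : ℕ) - i) * A i j := by
  rw [scaleConj, mul_diagonal, diagonal_mul, inv_pow, ← pow_sub_mul_pow ε (Fin.le_def.mp hij)]
  field_simp

theorem abs_scaleConj_apply_le {ε : ℝ} (hε₀ : 0 < ε) (hε₁ : ε ≤ 1) {A : Matrix (Fin n) (Fin n) ℝ}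
    (hA : A.IsUpperTriangular) (i j : Fin n) :
    |scaleConj ε A i j| ≤ (if j = i then |A i i| else 0) + ε * |A i j| := by
  rcases lt_trichotomy i j with hij | rfl | hji
  · rw [scaleConj_apply_of_le hε₀.ne' A hij.le, if_neg hij.ne', zero_add, abs_mul,
      abs_of_pos (pow_pos hε₀ _)]
    gcongr
    exact pow_le_of_le_one hε₀.le hε₁ (by omega)
  · rw [scaleConj_apply_of_le hε₀.ne' A le_rfl]
    simp [mul_nonneg hε₀.le (abs_nonneg _)]
  · have hzero : A i j = 0 := hA hji
    simp [scaleConj, mul_diagonal, diagonal_mul, hzero, hji.ne]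

theorem sum_abs_scaleConj_apply_le {ε : ℝ} (hε₀ : 0 < ε) (hε₁ : ε ≤ 1)
    {A : Matrix (Fin n) (Fin n) ℝ} (hA : A.IsUpperTriangular) (i : Fin n) :
    ∑ j, |scaleConj ε A i j| ≤ |A i i| + ε * ∑ j, |A i j| := by
  calc ∑ j, |scaleConj ε A i j| ≤ ∑ j, ((if j = i then |A i i| else 0) + ε * |A i j|) :=
        Finset.sum_le_sum fun j _ => abs_scaleConj_apply_le hε₀ hε₁ hA i j
    _ = |A i i| + ε * ∑ j, |A i j| := by
        rw [Finset.sum_add_distrib, Finset.sum_ite_eq', Finset.mul_sum, if_pos (Finset.mem_univ _)]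

theorem eventually_norm_scaleConj_lt_one {A : Matrix (Fin n) (Fin n) ℝ}
    (hA : A.IsUpperTriangular) (hdiag : ∀ i, |A i i| < 1) :
    ∀ᶠ ε in 𝓝[>] 0, ‖scaleConj ε A‖ < 1 := by
  have hrow : ∀ i, ∀ᶠ ε in 𝓝[>] (0 : ℝ), |A i i| + ε * ∑ j, |A i j| < 1 := fun i => by
    have hlim : Tendsto (fun ε : ℝ => |A i i| + ε * ∑ j, |A i j|) (𝓝 0) (𝓝 (|A i i|)) :=
      Continuous.tendsto' (by fun_prop) 0 _ (by simp)
    exact (hlim.mono_left nhdsWithin_le_nhds).eventually_lt_const (hdiag i)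
  filter_upwards [eventually_all.mpr hrow, Ioc_mem_nhdsGT one_pos] with ε hε hε₀₁
  refine linfty_opNorm_lt_of_forall_sum_lt one_pos fun i => ?_
  simp only [Real.norm_eq_abs]
  exact (sum_abs_scaleConj_apply_le hε₀₁.1 hε₀₁.2 hA i).trans_lt (hε i)

theorem norm_diagPow_inv_mulVec_pow_mul_add_le {ε : ℝ} (hε : ε ≠ 0)
    {A : Matrix (Fin n) (Fin n) ℝ} (hA : ‖scaleConj ε A‖ ≤ 1) (C : Matrix (Fin n) (Fin n) ℝ)
    (k : ℕ) (x v : Fin n → ℝ) :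
    ‖diagPow n ε⁻¹ *ᵥ ((A ^ k * C) *ᵥ x + v)‖ ≤
      ‖scaleConj ε C‖ * ‖diagPow n ε⁻¹ *ᵥ x‖ + ‖diagPow n ε⁻¹‖ * ‖v‖ := by
  rw [mulVec_add, ← mulVec_scaleConj hε, scaleConj_mul hε, scaleConj_pow hε]
  refine (norm_add_le _ _).trans (add_le_add ?_ (linfty_opNorm_mulVec _ _))
  refine (linfty_opNorm_mulVec _ _).trans ?_
  gcongr
  exact norm_pow_mul_le_of_norm_le_one hA _ _

end Scaling

theorem stmt18_general (n : ℕ) (B G : Matrix (Fin n) (Fin n) ℝ) (γ1 γ2 : ℝ)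
    (hBtri : B.BlockTriangular id) (hGtri : G.BlockTriangular id)
    (hρG : spectralRadius ℂ ((γ1⁻¹ • G).map Complex.ofReal) < 1)
    (hρB : spectralRadius ℂ ((γ2⁻¹ • B).map Complex.ofReal) < 1)
    (μ : ℕ → ℕ) (w α : ℕ → Fin n → ℝ) (W : ℝ)
    (hw : ∀ r, ‖w r‖ ≤ W)
    (hrec : ∀ r, α (r+1) = ((γ2⁻¹ • B) ^ (μ r) * (γ1⁻¹ • G)).mulVec (α r) + w r) :
    ∃ C1 : ℝ, ∀ r, ‖α r‖ ≤ C1 := by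
  have hG : (γ1⁻¹ • G).IsUpperTriangular := fun i j h => by simp [hGtri h]
  have hB : (γ2⁻¹ • B).IsUpperTriangular := fun i j h => by simp [hBtri h]
  obtain ⟨ε, ⟨hG', hB'⟩, hε⟩ :=
    ((eventually_norm_scaleConj_lt_one hG (IsUpperTriangular.abs_diag_lt_one hG hρG)).and
      (eventually_norm_scaleConj_lt_one hB (IsUpperTriangular.abs_diag_lt_one hB hρB))).and
      self_mem_nhdsWithin |>.exists
  set c := ‖scaleConj ε (γ1⁻¹ • G)‖
  set β := fun r => ‖diagPow n ε⁻¹ *ᵥ α r‖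
  have hstep : ∀ r, β (r + 1) ≤ c * β r + ‖diagPow n ε⁻¹‖ * W := fun r => by
    simp only [β, hrec]
    refine (norm_diagPow_inv_mulVec_pow_mul_add_le hε.ne' hB'.le _ _ _ _).trans ?_
    gcongr
    exact hw r
  refine ⟨‖diagPow n ε‖ * max (β 0) (‖diagPow n ε⁻¹‖ * W / (1 - c)), fun r => ?_⟩
  calc ‖α r‖ = ‖diagPow n ε *ᵥ (diagPow n ε⁻¹ *ᵥ α r)‖ := by
        rw [mulVec_mulVec, diagPow_mul_diagPow_inv hε.ne', one_mulVec]
    _ ≤ ‖diagPow n ε‖ * β r := linfty_opNorm_mulVec _ _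
    _ ≤ _ := by
        gcongr
        exact le_max_of_le_mul_add (norm_nonneg _) hG' hstep r

theorem stmt18 (n : ℕ) (B G : Matrix (Fin n) (Fin n) ℝ) (γ1 γ2 : ℝ)
    (hγ1 : 0 < γ1) (hγ2 : 0 < γ2)
    (hBtri : B.BlockTriangular id) (hGtri : G.BlockTriangular id)
    (hρG : spectralRadius ℂ ((γ1⁻¹ • G).map Complex.ofReal) < 1)
    (hρB : spectralRadius ℂ ((γ2⁻¹ • B).map Complex.ofReal) < 1)
    (C2 : ℝ) (hC2 : ∀ m : ℕ, ‖(γ2⁻¹ • B) ^ m‖ ≤ C2)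
    (μ : ℕ → ℕ) (w α : ℕ → Fin n → ℝ) (W α0 : ℝ)
    (hw : ∀ r, ‖w r‖ ≤ W) (hα0 : ‖α 0‖ ≤ α0)
    (hrec : ∀ r, α (r+1) = ((γ2⁻¹ • B) ^ (μ r) * (γ1⁻¹ • G)).mulVec (α r) + w r) :
    ∃ C1 : ℝ, ∀ r, ‖α r‖ ≤ C1 :=
  stmt18_general n B G γ1 γ2 hBtri hGtri hρG hρB μ w α W hw hrec
end
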